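/- arXiv:1706.05930 — 2 statements merged into one kernel-verified Lean document; each statement's English description precedes it below -/
import Mathlib

section
/- Let θ > 0, r, ρ ∈ ℝ, v = 2π/θ, k ∈ ℕ, T with kθ ≤ T < (k+1)θ, and f₀ : ℝ → ℝ bounded, measurable and nonnegative. If α* : ℝ → ℝ with 0 ≤ α* ≤ 1 a.e. maximizes the revenue functional G over all admissible controls, then for almost every t ∈ (0, T−θk) with f_k^{α*}(t) > 0 one has α*(t+θk) = 1/2; that is, on the final (possibly incomplete) round the optimal harvesting share equals 1/2 wherever the remaining stock is positive. -/
/-!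
Replacing `α*` by `1/2` from time `θk` on changes neither the densities `f_l^{α}` on `[0, θ)` for
`l ≤ k` (they only see `α` before `θk`) nor the first `k` terms of `G`. In the final term the
integrand changes by `e^{−ρ(t+θk)} (α*(t+θk) − 1/2)² f_k^{α*}(t) ≥ 0`, since
`α(1 − α) = 1/4 − (α − 1/2)²`. Optimality of `α*` forces the integral of this defect to vanish,
hence the defect vanishes almost everywhere.
-/

open MeasureTheory

/-- The round-`l` density just before harvesting in the spatial harvesting model:
`fDen r θ f₀ α 0 t = e^{rt} f₀(vt)` with speed `v = 2π/θ`, and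
`fDen r θ f₀ α (l+1) t = e^{rθ}(1 − α(t+θl)) · fDen r θ f₀ α l t`. -/
noncomputable def fDen (r θ : ℝ) (f₀ α : ℝ → ℝ) : ℕ → ℝ → ℝ
  | 0, t => Real.exp (r * t) * f₀ (2 * Real.pi / θ * t)
  | l + 1, t =>
      Real.exp (r * θ) * (1 - α (t + θ * (l : ℝ))) * fDen r θ f₀ α l t

/-- The sensitivity (Gateaux derivative of the state in direction `w`):
`z_0 = 0`, `z_{l+1}(t) = e^{rθ}[−w(t+θl) f_l^{α}(t) + (1−α(t+θl)) z_l(t)]`. -/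
noncomputable def zSens (r θ : ℝ) (f₀ α w : ℝ → ℝ) : ℕ → ℝ → ℝ
  | 0, _ => 0
  | l + 1, t =>
      Real.exp (r * θ) *
        (-(w (t + θ * (l : ℝ))) * fDen r θ f₀ α l t +
          (1 - α (t + θ * (l : ℝ))) * zSens r θ f₀ α w l t)

/-- The discounted revenue functional
`G(α) = Σ_{l=0}^{k−1} ∫_0^θ e^{−ρ(t+θl)} α(t+θl)(1−α(t+θl)) f_l^{α}(t) dt
      + ∫_0^{T−kθ} e^{−ρ(t+θk)} α(t+θk)(1−α(t+θk)) f_k^{α}(t) dt`. -/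
noncomputable def revenue (r ρ θ T : ℝ) (k : ℕ) (f₀ α : ℝ → ℝ) : ℝ :=
  (∑ l ∈ Finset.range k, ∫ t in (0 : ℝ)..θ,
      Real.exp (-ρ * (t + θ * (l : ℝ))) * α (t + θ * (l : ℝ)) *
        (1 - α (t + θ * (l : ℝ))) * fDen r θ f₀ α l t) +
    ∫ t in (0 : ℝ)..(T - (k : ℝ) * θ),
      Real.exp (-ρ * (t + θ * (k : ℝ))) * α (t + θ * (k : ℝ)) *
        (1 - α (t + θ * (k : ℝ))) * fDen r θ f₀ α k t

/-- A harvesting-share control is admissible if it is measurable with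
`0 ≤ α ≤ 1` almost everywhere. -/
def Admissible (α : ℝ → ℝ) : Prop :=
  Measurable α ∧ ∀ᵐ t : ℝ, 0 ≤ α t ∧ α t ≤ 1

open Set

theorem ae_add_right_of_ae {p : ℝ → Prop} (h : ∀ᵐ u, p u) (c : ℝ) : ∀ᵐ t, p (t + c) :=
  (measurePreserving_add_right volume c).quasiMeasurePreserving.ae h

theorem add_mul_lt_mul_of_lt {θ t : ℝ} {j k : ℕ} (hθ : 0 ≤ θ) (ht : t < θ) (hj : j < k) :
    t + θ * j < θ * k := by
  have : (j : ℝ) + 1 ≤ k := by exact_mod_cast hj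
  nlinarith

theorem Admissible.piecewise {s : Set ℝ} [DecidablePred (· ∈ s)] {α β : ℝ → ℝ}
    (hs : MeasurableSet s) (hα : Admissible α) (hβ : Admissible β) :
    Admissible (s.piecewise α β) := by
  refine ⟨hα.1.piecewise hs hβ.1, ?_⟩
  filter_upwards [hα.2, hβ.2] with t hαt hβt
  by_cases ht : t ∈ s <;> simp [ht, hαt, hβt]

theorem admissible_const {a : ℝ} (h₀ : 0 ≤ a) (h₁ : a ≤ 1) : Admissible fun _ => a :=
  ⟨measurable_const, .of_forall fun _ => ⟨h₀, h₁⟩⟩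

noncomputable def revenueDensity (r ρ θ : ℝ) (f₀ α : ℝ → ℝ) (l : ℕ) (t : ℝ) : ℝ :=
  Real.exp (-ρ * (t + θ * (l : ℝ))) * α (t + θ * (l : ℝ)) *
    (1 - α (t + θ * (l : ℝ))) * fDen r θ f₀ α l t

/-- The revenue lost in round `k` at time `t` by harvesting the share `α` instead of `1/2`. -/
noncomputable def shareDefect (r ρ θ : ℝ) (f₀ α : ℝ → ℝ) (k : ℕ) (t : ℝ) : ℝ :=
  Real.exp (-ρ * (t + θ * k)) * (α (t + θ * k) - 1 / 2) ^ 2 * fDen r θ f₀ α k t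

theorem ae_eq_zero_of_intervalIntegral_nonpos {μ : Measure ℝ} {f : ℝ → ℝ} {a b : ℝ}
    (hab : a ≤ b) (hf₀ : 0 ≤ᵐ[μ.restrict (Icc a b)] f) (hfi : IntervalIntegrable f μ a b)
    (hf : ∫ x in a..b, f x ∂μ ≤ 0) : f =ᵐ[μ.restrict (Ioc a b)] 0 := by
  have hIoc : 0 ≤ᵐ[μ.restrict (Ioc a b ∪ Ioc b a)] f := by
    rw [Ioc_eq_empty_of_le hab, union_empty]
    exact ae_restrict_of_ae_restrict_of_subset Ioc_subset_Icc_self hf₀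
  have h := (intervalIntegral.integral_eq_zero_iff_of_nonneg_ae hIoc hfi).1
    (hf.antisymm (intervalIntegral.integral_nonneg_of_ae_restrict hab hf₀))
  rwa [Ioc_eq_empty_of_le hab, union_empty] at h

section

variable {r ρ θ : ℝ} {f₀ α β : ℝ → ℝ}

theorem revenue_eq_sum_revenueDensity (T : ℝ) (k : ℕ) :
    revenue r ρ θ T k f₀ α =
      (∑ l ∈ Finset.range k, ∫ t in (0 : ℝ)..θ, revenueDensity r ρ θ f₀ α l t) +
        ∫ t in (0 : ℝ)..(T - (k : ℝ) * θ), revenueDensity r ρ θ f₀ α k t :=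
  rfl

theorem fDen_congr {l : ℕ} {t : ℝ} (h : ∀ j < l, α (t + θ * j) = β (t + θ * j)) :
    fDen r θ f₀ α l t = fDen r θ f₀ β l t := by
  induction l with
  | zero => rfl
  | succ l ih =>
    simp only [fDen, h l l.lt_succ_self, ih fun j hj => h j (hj.trans l.lt_succ_self)]

theorem revenueDensity_congr {l : ℕ} {t : ℝ} (h : ∀ j ≤ l, α (t + θ * j) = β (t + θ * j)) :
    revenueDensity r ρ θ f₀ α l t = revenueDensity r ρ θ f₀ β l t := by
  simp only [revenueDensity, h l le_rfl, fDen_congr fun j hj => h j hj.le]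

theorem measurable_fDen (hf₀ : Measurable f₀) (hα : Measurable α) (l : ℕ) :
    Measurable (fDen r θ f₀ α l) := by
  induction l with
  | zero => exact (by fun_prop : Measurable fun t => Real.exp (r * t)).mul (hf₀.comp (by fun_prop))
  | succ l ih =>
    exact (measurable_const.mul (measurable_const.sub (hα.comp (by fun_prop)))).mul ih

theorem fDen_nonneg_ae (hf₀ : ∀ x, 0 ≤ f₀ x) (hα : ∀ᵐ u, α u ≤ 1) (l : ℕ) :
    ∀ᵐ t, 0 ≤ fDen r θ f₀ α l t := by
  induction l with
  | zero => exact .of_forall fun t => mul_nonneg (Real.exp_pos _).le (hf₀ _)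
  | succ l ih =>
    filter_upwards [ih, ae_add_right_of_ae hα (θ * l)] with t hf hαt
    exact mul_nonneg (mul_nonneg (Real.exp_pos _).le (sub_nonneg.2 hαt)) hf

theorem abs_fDen_le_ae {M : ℝ} (hf₀ : ∀ x, |f₀ x| ≤ M) (hα : ∀ᵐ u, 0 ≤ α u ∧ α u ≤ 1) (l : ℕ) :
    ∀ᵐ t, |fDen r θ f₀ α l t| ≤ Real.exp (r * θ) ^ l * (Real.exp (r * t) * M) := by
  induction l with
  | zero =>
    refine .of_forall fun t => ?_
    simpa [fDen, abs_mul] using mul_le_mul_of_nonneg_left (hf₀ _) (Real.exp_pos (r * t)).le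
  | succ l ih =>
    filter_upwards [ih, ae_add_right_of_ae hα (θ * l)] with t hf hαt
    have h1α : |1 - α (t + θ * l)| ≤ 1 := abs_le.2 ⟨by linarith [hαt.2], by linarith [hαt.1]⟩
    calc |fDen r θ f₀ α (l + 1) t|
        = Real.exp (r * θ) * (|1 - α (t + θ * l)| * |fDen r θ f₀ α l t|) := by
          simp only [fDen, abs_mul, Real.abs_exp, mul_assoc]
      _ ≤ Real.exp (r * θ) * (1 * (Real.exp (r * θ) ^ l * (Real.exp (r * t) * M))) := by
          gcongr
      _ = Real.exp (r * θ) ^ (l + 1) * (Real.exp (r * t) * M) := by ring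

theorem integrableOn_fDen (hf₀m : Measurable f₀) (hf₀b : ∃ M, ∀ x, |f₀ x| ≤ M)
    (hα : Admissible α) (l : ℕ) (a b : ℝ) : IntegrableOn (fDen r θ f₀ α l) (Icc a b) := by
  obtain ⟨M, hM⟩ := hf₀b
  refine Integrable.mono'
    (Continuous.integrableOn_Icc (f := fun t => Real.exp (r * θ) ^ l * (Real.exp (r * t) * M))
      (by fun_prop))
    (measurable_fDen hf₀m hα.1 l).aestronglyMeasurable ?_
  exact ae_restrict_of_ae (abs_fDen_le_ae hM hα.2 l)

theorem integrableOn_mul_mul_fDen (hf₀m : Measurable f₀) (hf₀b : ∃ M, ∀ x, |f₀ x| ≤ M)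
    (hα : Admissible α) {w φ : ℝ → ℝ} {C : ℝ} (hw : Continuous w) (hφm : Measurable φ)
    (hφ : ∀ᵐ t, |φ t| ≤ C) (l : ℕ) (a b : ℝ) :
    IntegrableOn (fun t => w t * φ t * fDen r θ f₀ α l t) (Icc a b) := by
  have hφF : IntegrableOn (fun t => φ t * fDen r θ f₀ α l t) (Icc a b) :=
    (integrableOn_fDen hf₀m hf₀b hα l a b).bdd_mul hφm.aestronglyMeasurable
      (ae_restrict_of_ae hφ)
  simpa only [mul_assoc] using hφF.continuousOn_mul hw.continuousOn isCompact_Icc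

theorem intervalIntegrable_revenueDensity (hf₀m : Measurable f₀)
    (hf₀b : ∃ M, ∀ x, |f₀ x| ≤ M) (hα : Admissible α) (l : ℕ) (a b : ℝ) :
    IntervalIntegrable (revenueDensity r ρ θ f₀ α l) volume a b := by
  have hshare : ∀ᵐ t, |α (t + θ * l) * (1 - α (t + θ * l))| ≤ 1 := by
    filter_upwards [ae_add_right_of_ae hα.2 (θ * l)] with t ⟨h₀, h₁⟩
    rw [abs_le]
    constructor <;> nlinarith
  have hαm := hα.1
  have : IntegrableOn (fun t => Real.exp (-ρ * (t + θ * l)) *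
      (α (t + θ * l) * (1 - α (t + θ * l))) * fDen r θ f₀ α l t) (uIcc a b) :=
    integrableOn_mul_mul_fDen hf₀m hf₀b hα (by fun_prop) (by fun_prop) hshare l _ _
  refine (this.congr_fun (fun t _ => ?_) measurableSet_uIcc).intervalIntegrable
  simp only [revenueDensity]
  ring

theorem shareDefect_nonneg_ae (hf₀ : ∀ x, 0 ≤ f₀ x) (hα : ∀ᵐ u, α u ≤ 1) (k : ℕ) :
    ∀ᵐ t, 0 ≤ shareDefect r ρ θ f₀ α k t := by
  filter_upwards [fDen_nonneg_ae hf₀ hα k] with t ht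
  unfold shareDefect
  positivity

theorem intervalIntegrable_shareDefect (hf₀m : Measurable f₀) (hf₀b : ∃ M, ∀ x, |f₀ x| ≤ M)
    (hα : Admissible α) (k : ℕ) (a b : ℝ) :
    IntervalIntegrable (shareDefect r ρ θ f₀ α k) volume a b := by
  have hdev : ∀ᵐ t, |(α (t + θ * k) - 1 / 2) ^ 2| ≤ 1 := by
    filter_upwards [ae_add_right_of_ae hα.2 (θ * k)] with t ⟨h₀, h₁⟩
    rw [abs_le]
    constructor <;> nlinarith
  have hαm := hα.1
  exact (integrableOn_mul_mul_fDen hf₀m hf₀b hα (w := fun t => Real.exp (-ρ * (t + θ * k)))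
    (by fun_prop) (by fun_prop) hdev k _ _).intervalIntegrable

theorem intervalIntegral_revenueDensity_congr (hθ : 0 < θ) {l k : ℕ} (hl : l < k)
    (h : EqOn α β (Iio (θ * k))) :
    ∫ t in (0 : ℝ)..θ, revenueDensity r ρ θ f₀ α l t =
      ∫ t in (0 : ℝ)..θ, revenueDensity r ρ θ f₀ β l t := by
  simp only [intervalIntegral.integral_of_le hθ.le, integral_Ioc_eq_integral_Ioo]
  exact setIntegral_congr_fun measurableSet_Ioo fun t ht =>
    revenueDensity_congr fun j hj => h (add_mul_lt_mul_of_lt hθ.le ht.2 (hj.trans_lt hl))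

theorem revenue_sub_revenue_of_eqOn_Iio (hθ : 0 < θ) (T : ℝ) {k : ℕ}
    (h : EqOn α β (Iio (θ * k))) :
    revenue r ρ θ T k f₀ α - revenue r ρ θ T k f₀ β =
      (∫ t in (0 : ℝ)..(T - k * θ), revenueDensity r ρ θ f₀ α k t) -
        ∫ t in (0 : ℝ)..(T - k * θ), revenueDensity r ρ θ f₀ β k t := by
  rw [revenue_eq_sum_revenueDensity, revenue_eq_sum_revenueDensity,
    Finset.sum_congr rfl fun l hl =>
      intervalIntegral_revenueDensity_congr hθ (Finset.mem_range.1 hl) h]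
  ring

theorem revenueDensity_piecewise_half_sub (hθ : 0 ≤ θ) {k : ℕ} {t : ℝ} (ht₀ : 0 ≤ t)
    (ht : t < θ) :
    revenueDensity r ρ θ f₀ ((Iio (θ * k)).piecewise α fun _ => 1 / 2) k t -
        revenueDensity r ρ θ f₀ α k t = shareDefect r ρ θ f₀ α k t := by
  have hfDen : fDen r θ f₀ ((Iio (θ * k)).piecewise α fun _ => 1 / 2) k t = fDen r θ f₀ α k t :=
    fDen_congr fun j hj => piecewise_eqOn _ _ _ (add_mul_lt_mul_of_lt hθ ht hj)
  have hhalf : (Iio (θ * k)).piecewise α (fun _ => 1 / 2) (t + θ * k) = 1 / 2 :=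
    piecewise_eq_of_notMem _ _ _ (by simpa using ht₀)
  simp only [revenueDensity, shareDefect, hfDen, hhalf]
  ring

theorem revenue_piecewise_half_sub_revenue (hθ : 0 < θ) {T : ℝ} {k : ℕ} (hT₁ : k * θ ≤ T)
    (hT₂ : T < (k + 1) * θ) (hf₀m : Measurable f₀) (hf₀b : ∃ M, ∀ x, |f₀ x| ≤ M)
    (hα : Admissible α) :
    revenue r ρ θ T k f₀ ((Iio (θ * k)).piecewise α fun _ => 1 / 2) - revenue r ρ θ T k f₀ α =
      ∫ t in (0 : ℝ)..(T - k * θ), shareDefect r ρ θ f₀ α k t := by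
  have hβ : Admissible ((Iio (θ * k)).piecewise α fun _ => 1 / 2) :=
    hα.piecewise measurableSet_Iio (admissible_const (by norm_num) (by norm_num))
  rw [revenue_sub_revenue_of_eqOn_Iio hθ T (piecewise_eqOn _ _ _),
    ← intervalIntegral.integral_sub (intervalIntegrable_revenueDensity hf₀m hf₀b hβ k _ _)
      (intervalIntegrable_revenueDensity hf₀m hf₀b hα k _ _)]
  refine intervalIntegral.integral_congr fun t ht => ?_
  rw [uIcc_of_le (by linarith)] at ht
  exact revenueDensity_piecewise_half_sub hθ.le ht.1 (by linarith [ht.2])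

end

/-- final-round characterization, Proposition 2.
If `α*` maximizes the revenue functional, then on the final (possibly
incomplete) round the optimal harvesting share equals `1/2` almost everywhere
where the remaining stock is positive. -/
theorem final_round_share_half
    (θ : ℝ) (hθ : 0 < θ) (r ρ : ℝ) (k : ℕ) (T : ℝ)
    (hT₁ : (k : ℝ) * θ ≤ T) (hT₂ : T < ((k : ℝ) + 1) * θ)
    (f₀ : ℝ → ℝ) (hf₀m : Measurable f₀) (hf₀b : ∃ M, ∀ x, |f₀ x| ≤ M)
    (hf₀pos : ∀ x, 0 ≤ f₀ x)
    (αs : ℝ → ℝ) (hαs : Admissible αs)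
    (hopt : ∀ α : ℝ → ℝ, Admissible α →
      revenue r ρ θ T k f₀ α ≤ revenue r ρ θ T k f₀ αs) :
    ∀ᵐ t ∂(MeasureTheory.volume.restrict (Set.Ioo (0 : ℝ) (T - θ * (k : ℝ)))),
      0 < fDen r θ f₀ αs k t → αs (t + θ * (k : ℝ)) = 1 / 2 := by
  have hβ : Admissible ((Iio (θ * k)).piecewise αs fun _ => 1 / 2) :=
    hαs.piecewise measurableSet_Iio (admissible_const (by norm_num) (by norm_num))
  have hle : ∫ t in (0 : ℝ)..(T - k * θ), shareDefect r ρ θ f₀ αs k t ≤ 0 := by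
    linarith [hopt _ hβ,
      revenue_piecewise_half_sub_revenue (r := r) (ρ := ρ) hθ hT₁ hT₂ hf₀m hf₀b hαs]
  have hzero := ae_eq_zero_of_intervalIntegral_nonpos (sub_nonneg.2 hT₁)
    (ae_restrict_of_ae (shareDefect_nonneg_ae hf₀pos (hαs.2.mono fun _ h => h.2) k))
    (intervalIntegrable_shareDefect hf₀m hf₀b hαs k _ _) hle
  rw [mul_comm (k : ℝ) θ] at hzero
  filter_upwards [ae_restrict_of_ae_restrict_of_subset Ioo_subset_Ioc_self hzero] with t ht hpos
  simpa [shareDefect, hpos.ne', sub_eq_zero] using ht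
end

section
/- Let N ≥ 1, y₀ ∈ ℝ, and equal weights w_1 = w_2 = … = w_N = w ∈ ℝ. Then the point α* ∈ ℝ^N with α*_j = 1/(N+1) for every j is a critical point of G̃(α) = y₀ Σ_{n=1}^{N} α_n (1 − Σ_{i=1}^{n} α_i) w_n Π_{i=1}^{n−1}(1−α_i); that is, ∂G̃/∂α_m(α*) = 0 for every m ∈ {1,…,N}. -/
/-- The durable-good total revenue
`G̃(α) = y₀ Σ_{n=1}^{N} α_n (1 − Σ_{i=1}^{n} α_i) w_n Π_{i=1}^{n−1}(1−α_i)`,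
written with `0`-based indexing over `Fin N`. -/
noncomputable def durableRevenue (N : ℕ) (y₀ : ℝ) (w α : Fin N → ℝ) : ℝ :=
  y₀ * ∑ n : Fin N,
    α n * (1 - ∑ i ∈ Finset.Iic n, α i) * w n * ∏ i ∈ Finset.Iio n, (1 - α i)

/-- The simplex `K = {α ∈ ℝ^N : α_j ≥ 0 for all j, Σ_j α_j ≤ 1}`. -/
def simplexK (N : ℕ) : Set (Fin N → ℝ) :=
  {α | (∀ j, 0 ≤ α j) ∧ ∑ j, α j ≤ 1}

/-!
Only the share `α_m` moves away from the symmetric point `a = 1/(N+1)`. Rounds before `m` do not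
see it, round `m` earns a quadratic in `α_m`, and every later round sees it through its price
and through its remaining stock `1 - α_m`. Using `a (N + 1) = 1`, the derivative of the revenue of
round `n` is the increment `D (n + 1) - D n` of `D n = c a (1 - a)^(n-1) (N - n)` (for `n > m`, and
`0` otherwise), so the derivative of the total revenue telescopes to `y₀ (D N - D 0) = 0`.
-/

open Finset Function

section UpdateConst

variable {N : ℕ} {m n : Fin N} (a x : ℝ)

theorem sum_Iic_update_const_of_lt (h : n < m) :
    ∑ i ∈ Iic n, update (fun _ => a) m x i = ((n : ℕ) + 1) * a := by
  rw [sum_congr rfl fun i hi => update_of_ne ((mem_Iic.mp hi).trans_lt h).ne _ _,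
    sum_const, Fin.card_Iic, nsmul_eq_mul]
  push_cast; ring

theorem sum_Iic_update_const_of_le (h : m ≤ n) :
    ∑ i ∈ Iic n, update (fun _ => a) m x i = x + (n : ℕ) * a := by
  rw [← add_sum_erase _ _ (mem_Iic.mpr h), update_self,
    sum_congr rfl fun i hi => update_of_ne (ne_of_mem_erase hi) _ _, sum_const,
    card_erase_of_mem (mem_Iic.mpr h), Fin.card_Iic, nsmul_eq_mul, Nat.add_sub_cancel]

theorem prod_Iio_update_const_of_le (h : n ≤ m) :
    ∏ i ∈ Iio n, (1 - update (fun _ => a) m x i) = (1 - a) ^ (n : ℕ) := by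
  rw [prod_congr rfl fun i hi => by rw [update_of_ne ((mem_Iio.mp hi).trans_le h).ne],
    prod_const, Fin.card_Iio]

theorem prod_Iio_update_const_of_lt (h : m < n) :
    ∏ i ∈ Iio n, (1 - update (fun _ => a) m x i) = (1 - x) * (1 - a) ^ ((n : ℕ) - 1) := by
  rw [← mul_prod_erase _ _ (mem_Iio.mpr h), update_self,
    prod_congr rfl fun i hi => by rw [update_of_ne (ne_of_mem_erase hi)], prod_const,
    card_erase_of_mem (mem_Iio.mpr h), Fin.card_Iio]

end UpdateConst

noncomputable def roundRevenue {N : ℕ} (w α : Fin N → ℝ) (n : Fin N) : ℝ :=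
  α n * (1 - ∑ i ∈ Iic n, α i) * w n * ∏ i ∈ Iio n, (1 - α i)

theorem durableRevenue_eq_sum_roundRevenue (N : ℕ) (y₀ : ℝ) (w α : Fin N → ℝ) :
    durableRevenue N y₀ w α = y₀ * ∑ n, roundRevenue w α n :=
  rfl

/-- Closed form, at the symmetric point `a = 1/(N+1)`, of the derivative in `α_M` of the revenue
of the first `n` rounds, without the factor `y₀`. -/
noncomputable def partialRevenueDeriv (N M : ℕ) (a c : ℝ) (n : ℕ) : ℝ :=
  if n ≤ M then 0 else c * a * (1 - a) ^ (n - 1) * ((N : ℝ) - n)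

section RoundRevenue

variable {N : ℕ} {a : ℝ} (c : ℝ) {m n : Fin N}

theorem hasDerivAt_roundRevenue_update_of_lt (h : n < m) :
    HasDerivAt (fun x => roundRevenue (fun _ => c) (update (fun _ => a) m x) n) 0 a := by
  have hconst : (fun x => roundRevenue (fun _ => c) (update (fun _ => a) m x) n) =
      fun _ => a * (1 - ((n : ℕ) + 1) * a) * c * (1 - a) ^ (n : ℕ) := by
    funext x
    rw [roundRevenue, update_of_ne h.ne, sum_Iic_update_const_of_lt a x h,
      prod_Iio_update_const_of_le a x h.le]
  rw [hconst]
  exact hasDerivAt_const a _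

theorem hasDerivAt_roundRevenue_update_self :
    HasDerivAt (fun x => roundRevenue (fun _ => c) (update (fun _ => a) m x) m)
      (c * (1 - a) ^ (m : ℕ) * (1 - ((m : ℕ) + 2) * a)) a := by
  have hpoly : (fun x => roundRevenue (fun _ => c) (update (fun _ => a) m x) m) =
      fun x => x * (1 - (x + (m : ℕ) * a)) * c * (1 - a) ^ (m : ℕ) := by
    funext x
    rw [roundRevenue, update_self, sum_Iic_update_const_of_le a x le_rfl,
      prod_Iio_update_const_of_le a x le_rfl]
  rw [hpoly]
  refine ((((hasDerivAt_id' a).mul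
    (((hasDerivAt_id' a).add_const ((m : ℕ) * a)).const_sub 1)).mul_const c).mul_const
    ((1 - a) ^ (m : ℕ))).congr_deriv ?_
  ring

theorem hasDerivAt_roundRevenue_update_of_gt (h : m < n) :
    HasDerivAt (fun x => roundRevenue (fun _ => c) (update (fun _ => a) m x) n)
      (a * c * (1 - a) ^ ((n : ℕ) - 1) * (((n : ℕ) + 2) * a - 2)) a := by
  have hpoly : (fun x => roundRevenue (fun _ => c) (update (fun _ => a) m x) n) =
      fun x => a * (1 - (x + (n : ℕ) * a)) * c * ((1 - x) * (1 - a) ^ ((n : ℕ) - 1)) := by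
    funext x
    rw [roundRevenue, update_of_ne h.ne', sum_Iic_update_const_of_le a x h.le,
      prod_Iio_update_const_of_lt a x h]
  rw [hpoly]
  refine ((((((hasDerivAt_id' a).add_const ((n : ℕ) * a)).const_sub 1).const_mul a).mul_const
    c).mul (((hasDerivAt_id' a).const_sub 1).mul_const ((1 - a) ^ ((n : ℕ) - 1)))).congr_deriv ?_
  ring

end RoundRevenue

theorem hasDerivAt_roundRevenue_update {N : ℕ} {a : ℝ} (c : ℝ) (ha : a * ((N : ℝ) + 1) = 1)
    (m n : Fin N) :
    HasDerivAt (fun x => roundRevenue (fun _ => c) (update (fun _ => a) m x) n)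
      (partialRevenueDeriv N m a c (n + 1) - partialRevenueDeriv N m a c n) a := by
  rcases lt_trichotomy n m with h | rfl | h
  · convert hasDerivAt_roundRevenue_update_of_lt c h using 1
    have h' : (n : ℕ) + 1 ≤ m := h
    simp [partialRevenueDeriv, h', h.le]
  · convert hasDerivAt_roundRevenue_update_self (a := a) c using 1
    simp only [partialRevenueDeriv, le_refl, if_true, Nat.add_sub_cancel, sub_zero,
      Nat.not_succ_le_self, if_false]
    push_cast
    linear_combination c * (1 - a) ^ (n : ℕ) * ha
  · convert hasDerivAt_roundRevenue_update_of_gt c h using 1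
    obtain ⟨k, hk⟩ : ∃ k, (n : ℕ) = k + 1 := Nat.exists_eq_succ_of_ne_zero (by omega)
    rw [partialRevenueDeriv, partialRevenueDeriv, if_neg (by omega), if_neg (by omega), hk,
      Nat.add_sub_cancel, Nat.add_sub_cancel, pow_succ]
    push_cast
    linear_combination -a * c * (1 - a) ^ k * ha

theorem sum_partialRevenueDeriv_succ_sub (N M : ℕ) (a c : ℝ) :
    ∑ n : Fin N, (partialRevenueDeriv N M a c (n + 1) - partialRevenueDeriv N M a c n) = 0 := by
  rw [Fin.sum_univ_eq_sum_range (fun n => partialRevenueDeriv N M a c (n + 1) -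
    partialRevenueDeriv N M a c n), sum_range_sub]
  simp [partialRevenueDeriv]

theorem durable_equal_weights_critical_point_general
    (N : ℕ) (y₀ c : ℝ) :
    ∀ m : Fin N,
      HasDerivAt
        (fun x : ℝ => durableRevenue N y₀ (fun _ => c)
          (Function.update (fun _ : Fin N => (1 : ℝ) / ((N : ℝ) + 1)) m x))
        0 ((1 : ℝ) / ((N : ℝ) + 1)) := by
  intro m
  have ha : 1 / ((N : ℝ) + 1) * ((N : ℝ) + 1) = 1 := one_div_mul_cancel (by positivity)
  have hsum := (HasDerivAt.fun_sum (u := univ) fun n _ =>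
    hasDerivAt_roundRevenue_update c ha m n).const_mul y₀
  rw [sum_partialRevenueDeriv_succ_sub, mul_zero] at hsum
  simpa only [durableRevenue_eq_sum_roundRevenue] using hsum

/-- Lemma 5, exact version. With equal round weights, the
point with all shares equal to `1/(N+1)` is a critical point of the
durable-good revenue: every partial derivative vanishes there. -/
theorem durable_equal_weights_critical_point
    (N : ℕ) (hN : 1 ≤ N) (y₀ c : ℝ) :
    ∀ m : Fin N,
      HasDerivAt
        (fun x : ℝ => durableRevenue N y₀ (fun _ => c)
          (Function.update (fun _ : Fin N => (1 : ℝ) / ((N : ℝ) + 1)) m x))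
        0 ((1 : ℝ) / ((N : ℝ) + 1)) :=
  durable_equal_weights_critical_point_general N y₀ c
end
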